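/- Let H be a real Hilbert space, A: D(A) ⊆ H → H a dissipative densely defined operator (⟨Av, v⟩ ≤ 0 for all v ∈ D(A)), B a bounded operator from a Hilbert space U to H, d₀ > 0, and suppose P is a bounded self-adjoint operator on H and C > 0 are such that 2⟨P(A - d₀BB*)v, v⟩ ≤ -C‖v‖² for all v ∈ D(A). Let d: [0,∞) → ℝ be measurable with d₀ ≤ d(t) ≤ d₁ for a.e. t. Then for M := 2(d₁-d₀)²‖B*P‖²/(C d₀), the functional V(v) = ⟨Pv, v⟩ + M‖v‖² satisfies, for every v ∈ D(A) and a.e. t ≥ 0, 2⟨(P + M·I)(A - d(t)BB*)v, v⟩ ≤ -(C/2)‖v‖². -/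
import Mathlib


open scoped RealInnerProductSpace
open MeasureTheory

/-- The Lyapunov inequality for the time-varying operator `A - d(t)BB*`,
obtained from the one for `A - d₀BB*` by adding `M‖v‖²` to the functional. -/
theorem lyapunov_time_varying
    {H U : Type*} [NormedAddCommGroup H] [InnerProductSpace ℝ H] [CompleteSpace H]
    [NormedAddCommGroup U] [InnerProductSpace ℝ U] [CompleteSpace U]
    (D : Submodule ℝ H) (hdense : Dense (D : Set H))
    (A : D →ₗ[ℝ] H)
    (hdiss : ∀ v : D, ⟪A v, (v : H)⟫ ≤ 0)
    (B : U →L[ℝ] H)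
    (d₀ d₁ C : ℝ) (hd₀ : 0 < d₀) (hdd : d₀ ≤ d₁) (hC : 0 < C)
    (P : H →L[ℝ] H) (hP : IsSelfAdjoint P)
    (hlyap : ∀ v : D,
      2 * ⟪P (A v - d₀ • B (B.adjoint (v : H))), (v : H)⟫ ≤ -C * ‖(v : H)‖ ^ 2)
    (d : ℝ → ℝ) (hdmeas : Measurable d)
    (hdbd : ∀ᵐ t ∂(volume.restrict (Set.Ici (0 : ℝ))), d₀ ≤ d t ∧ d t ≤ d₁)
    (M : ℝ)
    (hM : M = 2 * (d₁ - d₀) ^ 2 * ‖(B.adjoint.comp P : H →L[ℝ] U)‖ ^ 2 / (C * d₀)) :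
    ∀ᵐ t ∂(volume.restrict (Set.Ici (0 : ℝ))), ∀ v : D,
      2 * (⟪P (A v - d t • B (B.adjoint (v : H))), (v : H)⟫ +
            M * ⟪A v - d t • B (B.adjoint (v : H)), (v : H)⟫) ≤
        -(C / 2) * ‖(v : H)‖ ^ 2 := by
  filter_upwards [hdbd] with t ht v
  obtain ⟨ht0, ht1⟩ := ht
  set K := ‖(B.adjoint.comp P : H →L[ℝ] U)‖ with hKdef
  have hK0 : 0 ≤ K := norm_nonneg _
  set w : H := B (B.adjoint (v : H)) with hw
  set c := ‖(v : H)‖ with hc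
  set b := ‖B.adjoint (v : H)‖ with hb
  have hc0 : 0 ≤ c := norm_nonneg _
  have hb0 : 0 ≤ b := norm_nonneg _
  have hwv : ⟪w, (v : H)⟫ = b ^ 2 := by
    rw [hw, real_inner_comm, ← ContinuousLinearMap.adjoint_inner_left,
      real_inner_self_eq_norm_sq]
  have hsym : ⟪P w, (v : H)⟫ = ⟪B.adjoint (v : H), B.adjoint (P (v : H))⟫ := by
    conv_lhs => rw [← hP.adjoint_eq]
    rw [ContinuousLinearMap.adjoint_inner_left, hw,
      ← ContinuousLinearMap.adjoint_inner_right]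
  have hKle : ‖B.adjoint (P (v : H))‖ ≤ K * c := by
    simpa using (B.adjoint.comp P).le_opNorm (v : H)
  have habs : |⟪P w, (v : H)⟫| ≤ K * c * b := by
    rw [hsym]
    calc |⟪B.adjoint (v : H), B.adjoint (P (v : H))⟫|
        ≤ b * ‖B.adjoint (P (v : H))‖ := abs_real_inner_le_norm _ _
      _ ≤ b * (K * c) := by
          exact mul_le_mul_of_nonneg_left hKle hb0
      _ = K * c * b := by ring
  have hpl : -(K * c * b) ≤ ⟪P w, (v : H)⟫ := neg_le_of_abs_le habs
  have hpu : ⟪P w, (v : H)⟫ ≤ K * c * b := le_of_abs_le habs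
  have e1 : ∀ r : ℝ, ⟪P (A v - r • w), (v : H)⟫ =
      ⟪P (A v), (v : H)⟫ - r * ⟪P w, (v : H)⟫ := by
    intro r
    rw [map_sub, P.map_smul, inner_sub_left, real_inner_smul_left]
  have e2 : ⟪A v - d t • w, (v : H)⟫ = ⟪A v, (v : H)⟫ - d t * b ^ 2 := by
    rw [inner_sub_left, real_inner_smul_left, hwv]
  have hly := hlyap v
  rw [e1 d₀] at hly
  have hdis := hdiss v
  have hM0 : 0 ≤ M := by
    rw [hM]; positivity
  have hMd : M * (C * d₀) = 2 * (d₁ - d₀) ^ 2 * K ^ 2 := by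
    rw [hM]
    field_simp
  rw [e1 (d t), e2]
  set p := ⟪P w, (v : H)⟫ with hpdef
  set L := ⟪P (A v), (v : H)⟫ with hLdef
  set a := ⟪A v, (v : H)⟫ with hadef
  have h1 : 0 ≤ (d t - d₀) * (p + K * c * b) :=
    mul_nonneg (by linarith) (by linarith)
  have h2 : 0 ≤ (d₁ - d t) * (K * c * b) :=
    mul_nonneg (by linarith) (by positivity)
  have step1 : 2 * (L - d t * p) ≤
      -C * c ^ 2 + 2 * (d₁ - d₀) * K * c * b := by
    linarith [h1, h2, hly]
  have step2 : 2 * M * a ≤ 0 :=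
    mul_nonpos_of_nonneg_of_nonpos (by linarith) hdis
  have step3 : -(2 * M * d t * b ^ 2) ≤ -(2 * M * d₀ * b ^ 2) := by
    linarith [mul_nonneg (mul_nonneg (sub_nonneg.mpr ht0) hM0) (sq_nonneg b)]
  have hCMdb : C * (M * d₀) * b ^ 2 = 2 * (d₁ - d₀) ^ 2 * K ^ 2 * b ^ 2 := by
    linear_combination b ^ 2 * hMd
  have step4 : 2 * (d₁ - d₀) * K * c * b - 2 * M * d₀ * b ^ 2 ≤ (C / 4) * c ^ 2 := by
    have hsq : 0 ≤ ((C / 2) * c - 2 * (d₁ - d₀) * K * b) ^ 2 := sq_nonneg _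
    have hmul : C * (2 * (d₁ - d₀) * K * c * b - 2 * M * d₀ * b ^ 2) ≤
        C * ((C / 4) * c ^ 2) := by linarith [hsq, hCMdb]

    exact le_of_mul_le_mul_left hmul hC
  linarith [step1, step2, step3, step4, mul_nonneg hC.le (sq_nonneg c)]
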